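/- arXiv:1004.0908 — 2 statements merged into one kernel-verified Lean document; each statement's English description precedes it below -/
import Mathlib

section
/- Let J be a monomial ideal of K[x₁,…,xₙ] generated by finitely many monomials each of degree at most δ. Then there exists a polynomial p ∈ ℚ[t] such that for all natural numbers r ≥ nδ, the affine Hilbert function aHf_{K[x]/J}(r) := dim_K (K[x]_{≤r} / (J ∩ K[x]_{≤r})) equals p(r). -/
open MvPolynomial

section Aux

open Finset Polynomial

/-- Auxiliary equivalences for counting monomials of degree at most `m`. -/
noncomputable def hpAuxE0 (n m : ℕ) :
    {s : Fin n →₀ ℕ // (∑ i, s i) ≤ m} ≃ {f : Fin n → ℕ // (∑ i, f i) ≤ m} :=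
  (Finsupp.equivFunOnFinite).subtypeEquiv (fun s => by rfl)

noncomputable def hpAuxE1 (n m : ℕ) :
    {f : Fin n → ℕ // (∑ i, f i) ≤ m} ≃ {g : Fin (n+1) → ℕ // (∑ i, g i) = m} where
  toFun f := ⟨Fin.cons (m - ∑ i, f.1 i) f.1, by
    have := f.2; rw [Fin.sum_cons]; omega⟩
  invFun g := ⟨Fin.tail g.1, by
    have := g.2; rw [Fin.sum_univ_succ] at this; simp only [Fin.tail]; omega⟩
  left_inv f := by ext i; simp [Fin.tail]
  right_inv g := by
    have := g.2; rw [Fin.sum_univ_succ] at this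
    ext i
    refine Fin.cases ?_ (fun j => ?_) i
    · simp only [Fin.cons_zero]; simp only [Fin.tail]; omega
    · simp [Fin.tail]

noncomputable def hpAuxE2 (n m : ℕ) :
    {g : Fin (n+1) → ℕ // (∑ i, g i) = m} ≃ {t : Fin (n+1) →₀ ℕ // (∑ i, t i) = m} :=
  ((Finsupp.equivFunOnFinite (α := Fin (n+1)) (M := ℕ)).subtypeEquiv (fun s => by rfl)).symm

noncomputable def hpAuxE3 (n m : ℕ) :
    {t : Fin (n+1) →₀ ℕ // (∑ i, t i) = m} ≃ Sym (Fin (n+1)) m :=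
  Equiv.subtypeEquiv (Multiset.toFinsupp (α := Fin (n+1))).toEquiv.symm (fun t => by
    show (∑ i, t i) = m ↔ Multiset.card (Finsupp.toMultiset t) = m
    rw [Finsupp.card_toMultiset, Finsupp.sum_fintype]
    · rfl
    · intro i; rfl)

theorem hpAux_card_le_sum (n m : ℕ) :
    Nat.card {s : Fin n →₀ ℕ // (∑ i, s i) ≤ m} = (m + n).choose n := by
  rw [Nat.card_congr ((((hpAuxE0 n m).trans (hpAuxE1 n m)).trans (hpAuxE2 n m)).trans
    (hpAuxE3 n m))]
  rw [Nat.card_eq_fintype_card, Sym.card_sym_eq_choose]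
  simp only [Fintype.card_fin, Nat.add_sub_cancel]
  rw [show n + 1 + m - 1 = m + n by omega, Nat.choose_symm_add]

/-- The finset of exponents of total degree at most `r`. -/
noncomputable def hpA (n r : ℕ) : Finset (Fin n →₀ ℕ) :=
  (Finset.Iic (Finsupp.equivFunOnFinite.symm fun _ => r)).filter (fun s => ∑ i, s i ≤ r)

theorem mem_hpA {n r : ℕ} {s : Fin n →₀ ℕ} : s ∈ hpA n r ↔ ∑ i, s i ≤ r := by
  simp only [hpA, Finset.mem_filter, Finset.mem_Iic, and_iff_right_iff_imp]
  intro h i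
  calc s i ≤ ∑ j, s j := Finset.single_le_sum (fun j _ => Nat.zero_le _) (Finset.mem_univ i)
    _ ≤ r := h

theorem card_hpA (n r : ℕ) : (hpA n r).card = (r + n).choose n := by
  rw [← hpAux_card_le_sum n r, ← Nat.card_eq_finsetCard]
  exact Nat.card_congr (Equiv.subtypeEquivRight (fun s => mem_hpA))

theorem card_hpA_filter_le (n r : ℕ) (L : Fin n →₀ ℕ) (h : (∑ i, L i) ≤ r) :
    ((hpA n r).filter (fun s => L ≤ s)).card = ((r - ∑ i, L i) + n).choose n := by
  rw [← card_hpA n (r - ∑ i, L i)]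
  apply Finset.card_bij' (fun s _ => s - L) (fun u _ => u + L)
  · intro s hs
    simp only [Finset.mem_filter, mem_hpA] at hs
    rw [mem_hpA]
    have hle : ∀ i, L i ≤ s i := fun i => hs.2 i
    have hts : ∀ i, (s - L) i = s i - L i := fun i => Finsupp.tsub_apply s L i
    calc ∑ i, (s - L) i = ∑ i, (s i - L i) := by simp [hts]
      _ = (∑ i, s i) - ∑ i, L i := by
          rw [Finset.sum_tsub_distrib]; intro i _; exact hle i
      _ ≤ r - ∑ i, L i := Nat.sub_le_sub_right hs.1 _
  · intro u hu
    rw [mem_hpA] at hu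
    simp only [Finset.mem_filter, mem_hpA]
    constructor
    · calc ∑ i, (u + L) i = (∑ i, u i) + ∑ i, L i := by
            simp [Finsupp.add_apply, Finset.sum_add_distrib]
        _ ≤ (r - ∑ i, L i) + ∑ i, L i := by omega
        _ ≤ r := by omega
    · exact le_add_self
  · intro s hs
    simp only [Finset.mem_filter] at hs
    exact tsub_add_cancel_of_le hs.2
  · intro u _
    exact add_tsub_cancel_right u L

theorem hp_IE (n r : ℕ) (S : Finset (Fin n →₀ ℕ)) :
    (((hpA n r).filter (fun s => ∀ m ∈ S, ¬ m ≤ s)).card : ℤ)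
      = ∑ T ∈ S.powerset, (-1:ℤ)^T.card * ((hpA n r).filter (fun s => T.sup id ≤ s)).card := by
  have key : ∀ T ∈ S.powerset, ((-1:ℤ)^T.card * ((hpA n r).filter (fun s => T.sup id ≤ s)).card)
      = ∑ s ∈ hpA n r, (-1:ℤ)^T.card * (if T.sup id ≤ s then 1 else 0) := by
    intro T _
    rw [Finset.card_filter]
    push_cast
    rw [Finset.mul_sum]
  rw [Finset.sum_congr rfl key, Finset.sum_comm, Finset.card_filter]
  push_cast
  refine Finset.sum_congr rfl fun s _ => ?_
  have h1 : ∀ T ∈ (S.filter (fun m => m ≤ s)).powerset,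
      (-1:ℤ)^T.card * (if T.sup id ≤ s then 1 else 0) = (-1:ℤ)^T.card := by
    intro T hT
    rw [Finset.mem_powerset] at hT
    rw [if_pos, mul_one]
    refine Finset.sup_le fun m hm => ?_
    have := hT hm
    rw [Finset.mem_filter] at this
    exact this.2
  have h2 : ∑ T ∈ S.powerset, (-1:ℤ)^T.card * (if T.sup id ≤ s then 1 else 0)
      = ∑ T ∈ (S.filter (fun m => m ≤ s)).powerset,
          (-1:ℤ)^T.card * (if T.sup id ≤ s then 1 else 0) := by
    refine (Finset.sum_subset (Finset.powerset_mono.mpr (Finset.filter_subset _ _)) ?_).symm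
    intro T hT hT'
    rw [Finset.mem_powerset] at hT hT'
    rw [if_neg, mul_zero]
    intro hle
    refine hT' fun m hm => ?_
    rw [Finset.mem_filter]
    exact ⟨hT hm, le_trans (Finset.le_sup (f := id) hm) hle⟩
  rw [h2, Finset.sum_congr rfl h1, Finset.sum_powerset_neg_one_pow_card]
  simp only [Finset.filter_eq_empty_iff]

theorem hp_finrank_restrictSupport (K : Type*) [Field K] (n : ℕ) (F : Finset (Fin n →₀ ℕ)) :
    Module.finrank K (restrictSupport K (↑F : Set (Fin n →₀ ℕ))) = F.card := by
  rw [Module.finrank_eq_card_basis (basisRestrictSupport K (↑F : Set (Fin n →₀ ℕ)))]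
  exact Fintype.card_coe F

theorem hp_sum_eq (n : ℕ) (s : Fin n →₀ ℕ) : (s.sum fun _ e => e) = ∑ i, s i :=
  Finsupp.sum_fintype _ _ (fun _ => rfl)

theorem hp_rtd_eq (K : Type*) [Field K] (n r : ℕ) :
    restrictTotalDegree (Fin n) K r = restrictSupport K (↑(hpA n r) : Set (Fin n →₀ ℕ)) := by
  unfold restrictTotalDegree
  congr 1
  ext s
  simp only [Set.mem_setOf_eq, Finset.coe_filter, hp_sum_eq, mem_hpA, Finset.mem_coe]

theorem hp_choose_poly (n d r : ℕ) (h : d ≤ r) :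
    (((r - d) + n).choose n : ℚ)
      = (n.factorial : ℚ)⁻¹ * ∏ i ∈ range n, ((r:ℚ) - d + n - i) := by
  have h1 : ((r - d + n).descFactorial n : ℚ)
      = ∏ i ∈ range n, ((r:ℚ) - d + n - i) := by
    rw [Nat.descFactorial_eq_prod_range]
    push_cast
    refine Finset.prod_congr rfl fun i hi => ?_
    rw [mem_range] at hi
    rw [Nat.cast_sub (by omega)]
    push_cast [Nat.cast_sub h]
    ring
  have h2 := Nat.descFactorial_eq_factorial_mul_choose (r - d + n) n
  have h3 : ((r - d + n).descFactorial n : ℚ)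
      = (n.factorial : ℚ) * ((r - d + n).choose n : ℚ) := by
    exact_mod_cast congrArg (Nat.cast : ℕ → ℚ) h2
  rw [h1] at h3
  have hf : (n.factorial : ℚ) ≠ 0 := by exact_mod_cast n.factorial_ne_zero
  field_simp at h3 ⊢
  linarith [h3]

theorem hp_sup_apply_le {n δ : ℕ} (T : Finset (Fin n →₀ ℕ)) (j : Fin n)
    (h : ∀ m ∈ T, m j ≤ δ) : (T.sup id) j ≤ δ := by
  classical
  induction T using Finset.induction_on with
  | empty => simp [Finsupp.bot_eq_zero]
  | @insert a s ha ih =>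
    rw [Finset.sup_insert]
    have heq : (id a ⊔ s.sup id) j = a j ⊔ (s.sup id) j := rfl
    rw [heq]
    exact sup_le (h a (mem_insert_self a s)) (ih fun m hm => h m (mem_insert_of_mem hm))

end Aux

/-- The affine Hilbert function of `K[x]/J`:
`r ↦ dim_K (K[x]_{≤ r} / (J ∩ K[x]_{≤ r}))`. -/
noncomputable def affineHilbertFn (K : Type*) [Field K] (n : ℕ)
    (J : Ideal (MvPolynomial (Fin n) K)) (r : ℕ) : ℕ :=
  Module.finrank K
    ((restrictTotalDegree (Fin n) K r) ⧸
      (Submodule.comap (restrictTotalDegree (Fin n) K r).subtype (J.restrictScalars K)))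

theorem hp_dim_eq_card (K : Type*) [Field K] (n r : ℕ) (J : Ideal (MvPolynomial (Fin n) K))
    (S : Finset (Fin n →₀ ℕ))
    (hJ : J = Ideal.span ((fun s => (monomial s (1 : K))) '' S)) :
    affineHilbertFn K n J r = ((hpA n r).filter (fun s => ∀ m ∈ S, ¬ m ≤ s)).card := by
  classical
  set p := restrictTotalDegree (Fin n) K r with hp
  set q := J.restrictScalars K with hq
  have hW : Submodule.comap p.subtype q = Submodule.comap p.subtype (q ⊓ p) := by
    ext x
    simp only [Submodule.mem_comap, Submodule.mem_inf]
    exact ⟨fun h => ⟨h, x.2⟩, fun h => h.1⟩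
  have hinf : q ⊓ p = restrictSupport K (↑((hpA n r).filter (fun s => ∃ m ∈ S, m ≤ s)) :
      Set (Fin n →₀ ℕ)) := by
    ext f
    rw [Submodule.mem_inf, hq, Submodule.restrictScalars_mem, hJ,
      mem_ideal_span_monomial_image, hp, hp_rtd_eq]
    simp only [restrictSupport, Finsupp.mem_supported]
    constructor
    · rintro ⟨h1, h2⟩ xi hxi
      have := h2 hxi
      simp only [Finset.coe_filter, Set.mem_setOf_eq, Finset.mem_coe, mem_hpA] at this ⊢
      rcases h1 xi hxi with ⟨si, hsi, hle⟩
      exact ⟨this, si, hsi, hle⟩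
    · intro h
      constructor
      · intro xi hxi
        have := h hxi
        simp only [Finset.coe_filter, Set.mem_setOf_eq, Finset.mem_coe, mem_hpA] at this
        exact this.2
      · intro xi hxi
        have := h hxi
        simp only [Finset.coe_filter, Set.mem_setOf_eq, Finset.mem_coe, mem_hpA] at this ⊢
        exact this.1
  have hfinW : Module.finrank K (Submodule.comap p.subtype q)
      = ((hpA n r).filter (fun s => ∃ m ∈ S, m ≤ s)).card := by
    rw [hW, ← hp_finrank_restrictSupport K n, ← hinf]
    exact LinearEquiv.finrank_eq (Submodule.comapSubtypeEquivOfLe inf_le_right)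
  have hfd : Module.Finite K p := by rw [hp]; infer_instance
  have hrank := Submodule.finrank_quotient_add_finrank (Submodule.comap p.subtype q)
  have hptot : Module.finrank K p = (hpA n r).card := by
    rw [hp, hp_rtd_eq]; exact hp_finrank_restrictSupport K n _
  have hsplit := Finset.card_filter_add_card_filter_not
    (s := hpA n r) (p := fun s => ∃ m ∈ S, m ≤ s)
  have hcongr : ((hpA n r).filter (fun s => ¬ ∃ m ∈ S, m ≤ s)).card
      = ((hpA n r).filter (fun s => ∀ m ∈ S, ¬ m ≤ s)).card := by
    congr 1
    apply Finset.filter_congr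
    intro x _
    push_neg
    rfl
  have hdef : affineHilbertFn K n J r
      = Module.finrank K (p ⧸ Submodule.comap p.subtype q) := rfl
  omega

theorem monomial_ideal_hilbert_poly_from_n_delta
    (K : Type*) [Field K] (n δ : ℕ) (J : Ideal (MvPolynomial (Fin n) K))
    (S : Finset (Fin n →₀ ℕ)) (hdeg : ∀ s ∈ S, (∑ i, s i) ≤ δ)
    (hJ : J = Ideal.span ((fun s => (monomial s (1 : K))) '' S)) :
    ∃ p : Polynomial ℚ, ∀ r : ℕ, n * δ ≤ r →
      (affineHilbertFn K n J r : ℚ) = p.eval (r : ℚ) := by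
  classical
  -- degree of the sup of a subset
  set d : Finset (Fin n →₀ ℕ) → ℕ := fun T => ∑ i, (T.sup id) i with hd
  have hdbound : ∀ T ∈ S.powerset, d T ≤ n * δ := by
    intro T hT
    rw [Finset.mem_powerset] at hT
    calc d T ≤ ∑ _i : Fin n, δ := by
          refine Finset.sum_le_sum fun i _ => ?_
          refine hp_sup_apply_le T i fun m hm => ?_
          calc m i ≤ ∑ j, m j :=
                Finset.single_le_sum (fun j _ => Nat.zero_le _) (Finset.mem_univ i)
            _ ≤ δ := hdeg m (hT hm)
      _ = n * δ := by simp [Finset.sum_const, mul_comm]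
  refine ⟨∑ T ∈ S.powerset, Polynomial.C ((-1:ℚ)^T.card) *
      (Polynomial.C ((n.factorial : ℚ))⁻¹ *
        ∏ i ∈ Finset.range n,
          (Polynomial.X - Polynomial.C ((d T : ℚ)) + Polynomial.C ((n:ℚ) - i))), ?_⟩
  intro r hr
  rw [hp_dim_eq_card K n r J S hJ]
  have hIE := hp_IE n r S
  have hQ : (((hpA n r).filter (fun s => ∀ m ∈ S, ¬ m ≤ s)).card : ℚ)
      = ∑ T ∈ S.powerset, (-1:ℚ)^T.card
          * ((hpA n r).filter (fun s => T.sup id ≤ s)).card := by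
    exact_mod_cast congrArg (Int.cast : ℤ → ℚ) hIE
  rw [hQ, Polynomial.eval_finset_sum]
  refine Finset.sum_congr rfl fun T hT => ?_
  have hdr : d T ≤ r := le_trans (hdbound T hT) hr
  rw [card_hpA_filter_le n r (T.sup id) hdr, hp_choose_poly n (d T) r hdr]
  simp only [Polynomial.eval_mul, Polynomial.eval_C, Polynomial.eval_prod,
    Polynomial.eval_add, Polynomial.eval_sub, Polynomial.eval_X]
  ring_nf
end

section
/- Let k ⊆ K be fields and ⪯ a global monomial order on ℕⁿ. If G is a Gröbner basis of an ideal J ⊆ k[x₁,…,xₙ], then G is also a Gröbner basis of the extended ideal K[x]·J, and Exp_⪯(K[x]·J) = Exp_⪯(J). -/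
open MvPolynomial

/-- The set of leading exponents of the nonzero elements of an ideal,
with respect to a linear order `ord` on exponents. -/
def leadExpSet {R : Type*} [CommRing R] {n : ℕ} (ord : LinearOrder (Fin n →₀ ℕ))
    (I : Ideal (MvPolynomial (Fin n) R)) : Set (Fin n →₀ ℕ) :=
  {α | ∃ f ∈ I, f ≠ 0 ∧ α ∈ f.support ∧ ∀ β ∈ f.support, ord.le β α}

/-- Coefficient-wise application of a `k`-linear functional `K →ₗ[k] k` to a
polynomial with coefficients in `K`. -/
noncomputable def projPoly {k K : Type*} [Field k] [Field K] [Algebra k K] {n : ℕ}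
    (π : K →ₗ[k] k) : MvPolynomial (Fin n) K →+ MvPolynomial (Fin n) k :=
  AddMonoidAlgebra.coeffAddEquiv.symm.toAddMonoidHom.comp
    ((Finsupp.mapRange.addMonoidHom π.toAddMonoidHom).comp
      AddMonoidAlgebra.coeffAddEquiv.toAddMonoidHom)

lemma coeff_projPoly {k K : Type*} [Field k] [Field K] [Algebra k K] {n : ℕ}
    (π : K →ₗ[k] k) (m : Fin n →₀ ℕ) (p : MvPolynomial (Fin n) K) :
    coeff m (projPoly π p) = π (coeff m p) :=
  Finsupp.mapRange_apply (hf := map_zero _)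

lemma projPoly_mul {k K : Type*} [Field k] [Field K] [Algebra k K] {n : ℕ}
    (π : K →ₗ[k] k) (q : MvPolynomial (Fin n) K) (h : MvPolynomial (Fin n) k) :
    projPoly π (q * MvPolynomial.map (algebraMap k K) h) = projPoly π q * h := by
  classical
  ext m
  rw [coeff_projPoly, coeff_mul, coeff_mul, map_sum]
  refine Finset.sum_congr rfl fun x _ => ?_
  rw [coeff_projPoly, coeff_map]
  calc π (coeff x.1 q * algebraMap k K (coeff x.2 h))
      = π (coeff x.2 h • coeff x.1 q) := by rw [Algebra.smul_def, mul_comm]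
    _ = coeff x.2 h • π (coeff x.1 q) := map_smul _ _ _
    _ = π (coeff x.1 q) * coeff x.2 h := by rw [smul_eq_mul, mul_comm]

lemma projPoly_mem {k K : Type*} [Field k] [Field K] [Algebra k K] {n : ℕ}
    (π : K →ₗ[k] k) (J : Ideal (MvPolynomial (Fin n) k))
    {f : MvPolynomial (Fin n) K}
    (hf : f ∈ Ideal.map (MvPolynomial.map (algebraMap k K)) J) :
    projPoly π f ∈ J := by
  rw [Ideal.map, Ideal.span, Submodule.mem_span_set] at hf
  obtain ⟨c, hcs, hsum⟩ := hf
  rw [← hsum, Finsupp.sum, map_sum]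
  refine Ideal.sum_mem _ fun q hq => ?_
  obtain ⟨h, hhJ, rfl⟩ := hcs hq
  rw [smul_eq_mul, projPoly_mul]
  exact Ideal.mul_mem_left _ _ hhJ

/-- The key fact: extension of scalars does not change the set of leading exponents. -/
lemma leadExpSet_map_eq {k K : Type*} [Field k] [Field K] [Algebra k K] {n : ℕ}
    (ord : LinearOrder (Fin n →₀ ℕ)) (J : Ideal (MvPolynomial (Fin n) k)) :
    leadExpSet ord (Ideal.map (MvPolynomial.map (algebraMap k K)) J) = leadExpSet ord J := by
  have hinj : Function.Injective (algebraMap k K) := (algebraMap k K).injective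
  apply Set.Subset.antisymm
  · rintro α ⟨f, hfJ, hf0, hαsupp, hmax⟩
    let b := Module.Basis.ofVectorSpace k K
    have hα : coeff α f ≠ 0 := mem_support_iff.mp hαsupp
    have : b.repr (coeff α f) ≠ 0 := fun h => hα (by simpa using b.repr.injective (by simpa using h))
    obtain ⟨i, hi⟩ := Finsupp.ne_iff.mp this
    refine ⟨projPoly (b.coord i) f, projPoly_mem _ J hfJ, ?_, ?_, ?_⟩
    · intro h0
      apply hi
      have := congrArg (coeff α) h0
      rw [coeff_projPoly] at this
      simpa [Module.Basis.coord_apply] using this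
    · rw [mem_support_iff, coeff_projPoly]
      simpa [Module.Basis.coord_apply] using hi
    · intro β hβ
      refine hmax β ?_
      rw [mem_support_iff, coeff_projPoly] at hβ
      rw [mem_support_iff]
      intro h
      exact hβ (by rw [h]; simp)
  · rintro α ⟨f, hfJ, hf0, hαsupp, hmax⟩
    refine ⟨MvPolynomial.map (algebraMap k K) f, Ideal.mem_map_of_mem _ hfJ, ?_, ?_, ?_⟩
    · intro h
      exact hf0 (MvPolynomial.map_injective _ hinj (by simpa using h))
    · rwa [support_map_of_injective f hinj]
    · intro β hβ
      exact hmax β (by rwa [support_map_of_injective f hinj] at hβ)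

theorem groebner_basis_stable_under_field_extension
    {k K : Type*} [Field k] [Field K] [Algebra k K] {n : ℕ}
    (ord : LinearOrder (Fin n →₀ ℕ))
    (hcompat : ∀ a b c : Fin n →₀ ℕ, ord.lt a b → ord.lt (a + c) (b + c))
    (hglobal : ∀ a : Fin n →₀ ℕ, ord.le 0 a)
    (J : Ideal (MvPolynomial (Fin n) k))
    (G : Finset (MvPolynomial (Fin n) k)) (hGJ : ↑G ⊆ (J : Set (MvPolynomial (Fin n) k)))
    (e : MvPolynomial (Fin n) k → (Fin n →₀ ℕ))
    (he : ∀ g ∈ G, g ≠ 0 ∧ e g ∈ g.support ∧ ∀ β ∈ g.support, ord.le β (e g))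
    (hGB : leadExpSet ord J = ⋃ g ∈ G, {α | ∃ γ, α = e g + γ}) :
    ((MvPolynomial.map (algebraMap k K)) '' ↑G ⊆
        ((Ideal.map (MvPolynomial.map (algebraMap k K)) J :
          Ideal (MvPolynomial (Fin n) K)) : Set (MvPolynomial (Fin n) K))) ∧
    (leadExpSet ord (Ideal.map (MvPolynomial.map (algebraMap k K)) J) =
      ⋃ g ∈ G, {α | ∃ γ, α = e g + γ}) ∧
    (leadExpSet ord (Ideal.map (MvPolynomial.map (algebraMap k K)) J) =
      leadExpSet ord J) := by
  have heq := leadExpSet_map_eq (K := K) ord J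
  refine ⟨?_, heq.trans hGB, heq⟩
  rintro x ⟨g, hg, rfl⟩
  exact Ideal.mem_map_of_mem _ (hGJ hg)
end
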